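/- arXiv:1411.2038 — 4 statements merged into one kernel-verified Lean document; each statement's English description precedes it below -/
import Mathlib

section
/- For every positive integer k, there do not exist a positive integer d and positive semidefinite Hermitian d×d complex matrices A_1,…,A_10 such that (f_10(x))^k = det(x_1 A_1 + ⋯ + x_10 A_10) as polynomials in x_1,…,x_10. That is, no power of f_10 has a definite determinantal representation. -/
open MvPolynomial
open scoped ComplexOrder

/-- The collection 𝓑 of bases of the 10-element Vámos matroid `V₁₀`. -/
def vamosBases10 : Finset (Finset ℕ) :=
  ((Finset.Icc 1 10).powersetCard 4) \
    {{1, 2, 3, 4}, {1, 2, 5, 6}, {1, 2, 7, 8}, {1, 2, 9, 10},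
      {3, 4, 5, 6}, {5, 6, 7, 8}, {7, 8, 9, 10}}

/-- The basis generating polynomial `f₁₀ = Σ_{B ∈ 𝓑} Π_{i ∈ B} xᵢ ∈ ℝ[x₁,…,x₁₀]`. -/
noncomputable def f10 : MvPolynomial ℕ ℝ :=
  ∑ B ∈ vamosBases10, ∏ i ∈ B, X i

/-!
Suppose `f^k = det (∑ xᵢ Aᵢ)` with `Aᵢ ⪰ 0`, where `f` is the basis generating polynomial of a
matroid with rank function `r`. Restricting to the line `x = 𝟙 + t • 𝟙_S` gives
`(∑_B (1 + t)^|B ∩ S|)^k = det (∑ᵢ Aᵢ + t ∑_{i ∈ S} Aᵢ)`. At `t = 0` this shows that `∑ᵢ Aᵢ` is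
positive definite, and then the degree in `t` of the right side is `rank (∑_{i ∈ S} Aᵢ)`, while
that of the left side is `k * r S`. For positive semidefinite matrices,
`rank (∑_{i ∈ S} Aᵢ) = d - dim ⋂_{i ∈ S} ker Aᵢ`, and the modular law for subspaces makes such
rank functions satisfy Ingleton's inequality. The Vámos matroid violates it at the pairs
`{1,2}, {5,6}, {3,4}, {7,8}`.
-/

open Module

def IngletonIneq {ι : Type*} [DecidableEq ι] (r : Finset ι → ℕ) (a b c d : Finset ι) : Prop :=
  r a + r b + r (a ∪ b ∪ c) + r (a ∪ b ∪ d) + r (c ∪ d) ≤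
    r (a ∪ b) + r (a ∪ c) + r (a ∪ d) + r (b ∪ c) + r (b ∪ d)

theorem ingletonIneq_const_mul_iff {ι : Type*} [DecidableEq ι] {r : Finset ι → ℕ}
    {a b c d : Finset ι} {k : ℕ} (hk : 0 < k) :
    IngletonIneq (fun S => k * r S) a b c d ↔ IngletonIneq r a b c d := by
  simp only [IngletonIneq, ← mul_add]
  exact Nat.mul_le_mul_left_iff hk

theorem Submodule.finrank_inf_ingleton {K V : Type*} [DivisionRing K] [AddCommGroup V]
    [Module K V] [FiniteDimensional K V] (A B C D : Submodule K V) :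
    finrank K ↥(A ⊓ C) + finrank K ↥(B ⊓ C) + finrank K ↥(A ⊓ D) + finrank K ↥(B ⊓ D)
        + finrank K ↥(A ⊓ B) ≤
      finrank K ↥(A ⊓ B ⊓ C) + finrank K ↥(A ⊓ B ⊓ D) + finrank K ↥(C ⊓ D)
        + finrank K A + finrank K B := by
  have hC := finrank_sup_add_finrank_inf_eq (A ⊓ C) (B ⊓ C)
  have hD := finrank_sup_add_finrank_inf_eq (A ⊓ D) (B ⊓ D)
  have hCD := finrank_sup_add_finrank_inf_eq ((A ⊔ B) ⊓ C) ((A ⊔ B) ⊓ D)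
  have hAB := finrank_sup_add_finrank_inf_eq A B
  rw [inf_inf_inf_comm, inf_idem] at hC hD
  have iC : finrank K ↥(A ⊓ C ⊔ B ⊓ C) ≤ finrank K ↥((A ⊔ B) ⊓ C) :=
    finrank_mono (sup_le (inf_le_inf_right C le_sup_left) (inf_le_inf_right C le_sup_right))
  have iD : finrank K ↥(A ⊓ D ⊔ B ⊓ D) ≤ finrank K ↥((A ⊔ B) ⊓ D) :=
    finrank_mono (sup_le (inf_le_inf_right D le_sup_left) (inf_le_inf_right D le_sup_right))
  have iCD : finrank K ↥((A ⊔ B) ⊓ C ⊓ ((A ⊔ B) ⊓ D)) ≤ finrank K ↥(C ⊓ D) :=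
    finrank_mono (inf_le_inf inf_le_right inf_le_right)
  have iAB : finrank K ↥((A ⊔ B) ⊓ C ⊔ (A ⊔ B) ⊓ D) ≤ finrank K ↥(A ⊔ B) :=
    finrank_mono (sup_le inf_le_left inf_le_left)
  omega

namespace Matrix

variable {n ι 𝕜 : Type*} [Fintype n] [RCLike 𝕜]

theorem PosSemidef.ker_mulVecLin_add {A B : Matrix n n 𝕜} (hA : A.PosSemidef)
    (hB : B.PosSemidef) :
    LinearMap.ker (A + B).mulVecLin = LinearMap.ker A.mulVecLin ⊓ LinearMap.ker B.mulVecLin := by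
  ext x
  simp only [LinearMap.mem_ker, Submodule.mem_inf, mulVecLin_apply, add_mulVec]
  refine ⟨fun h => ?_, fun ⟨hAx, hBx⟩ => by rw [hAx, hBx, add_zero]⟩
  have hsum : star x ⬝ᵥ A *ᵥ x + star x ⬝ᵥ B *ᵥ x = 0 := by
    rw [← dotProduct_add, h, dotProduct_zero]
  obtain ⟨hAx, hBx⟩ := (add_eq_zero_iff_of_nonneg (hA.dotProduct_mulVec_nonneg x)
    (hB.dotProduct_mulVec_nonneg x)).1 hsum
  exact ⟨(hA.dotProduct_mulVec_zero_iff x).1 hAx, (hB.dotProduct_mulVec_zero_iff x).1 hBx⟩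

theorem ker_mulVecLin_sum_of_posSemidef [DecidableEq ι] {A : ι → Matrix n n 𝕜} {s : Finset ι}
    (hA : ∀ i ∈ s, (A i).PosSemidef) :
    LinearMap.ker (∑ i ∈ s, A i).mulVecLin = ⨅ i ∈ s, LinearMap.ker (A i).mulVecLin := by
  induction s using Finset.induction_on with
  | empty => simp
  | insert j s hj ih =>
    have hs : ∀ i ∈ s, (A i).PosSemidef := fun i hi => hA i (Finset.mem_insert_of_mem hi)
    rw [Finset.sum_insert hj, (hA j (Finset.mem_insert_self j s)).ker_mulVecLin_add
      (posSemidef_sum s hs), ih hs, Finset.iInf_insert]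

theorem rank_add_finrank_ker_mulVecLin (A : Matrix n n 𝕜) :
    A.rank + finrank 𝕜 (LinearMap.ker A.mulVecLin) = Fintype.card n := by
  rw [rank, LinearMap.finrank_range_add_finrank_ker, finrank_fintype_fun_eq_card]

theorem ingletonIneq_rank_sum [DecidableEq ι] {A : ι → Matrix n n 𝕜} {a b c d : Finset ι}
    (hA : ∀ i ∈ a ∪ b ∪ c ∪ d, (A i).PosSemidef) :
    IngletonIneq (fun S => (∑ i ∈ S, A i).rank) a b c d := by
  obtain ⟨V, hV⟩ : ∃ V : Finset ι → Submodule 𝕜 (n → 𝕜),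
      ∀ S, V S = ⨅ i ∈ S, LinearMap.ker (A i).mulVecLin := ⟨_, fun _ => rfl⟩
  have hunion (S T : Finset ι) : V S ⊓ V T = V (S ∪ T) := by
    simp only [hV, Finset.iInf_union]
  have hrank (S : Finset ι) (hS : S ⊆ a ∪ b ∪ c ∪ d) :
      (∑ i ∈ S, A i).rank + finrank 𝕜 (V S) = Fintype.card n := by
    rw [hV, ← ker_mulVecLin_sum_of_posSemidef fun i hi => hA i (hS hi),
      rank_add_finrank_ker_mulVecLin]
  have hingleton := Submodule.finrank_inf_ingleton (V a) (V b) (V c) (V d)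
  repeat rw [hunion] at hingleton
  have := hrank a ?_; have := hrank b ?_; have := hrank (a ∪ b) ?_; have := hrank (a ∪ c) ?_
  have := hrank (a ∪ d) ?_; have := hrank (b ∪ c) ?_; have := hrank (b ∪ d) ?_
  have := hrank (c ∪ d) ?_; have := hrank (a ∪ b ∪ c) ?_; have := hrank (a ∪ b ∪ d) ?_
  · dsimp only [IngletonIneq]
    omega
  all_goals intro x; simp only [Finset.mem_union]; tauto

open scoped MatrixOrder in
theorem PosDef.exists_simultaneous_diagonalization [DecidableEq n] {T M : Matrix n n 𝕜}
    (hT : T.PosDef) (hM : M.IsHermitian) :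
    ∃ (P : Matrix n n 𝕜) (d : n → ℝ), P.det ≠ 0 ∧ T = P * Pᴴ ∧
      M = P * diagonal (RCLike.ofReal ∘ d) * Pᴴ := by
  obtain ⟨B, rfl⟩ := CStarAlgebra.nonneg_iff_eq_star_mul_self.mp hT.posSemidef.nonneg
  rw [star_eq_conjTranspose] at hT ⊢
  have hB : IsUnit B.det := by
    have := (isUnit_iff_isUnit_det _).1 hT.isUnit
    rw [det_mul] at this
    exact isUnit_of_mul_isUnit_right this
  have hN := isHermitian_conjTranspose_mul_mul B⁻¹ hM
  obtain ⟨U, d, hUU, hspec⟩ : ∃ (U : Matrix n n 𝕜) (d : n → ℝ), U * Uᴴ = 1 ∧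
      B⁻¹ᴴ * M * B⁻¹ = U * diagonal (RCLike.ofReal ∘ d) * Uᴴ :=
    ⟨_, _, by simpa [star_eq_conjTranspose] using
      Unitary.mul_star_self_of_mem hN.eigenvectorUnitary.2, hN.spectral_theorem⟩
  refine ⟨Bᴴ * U, d, ?_, ?_, ?_⟩
  · rw [det_mul, det_conjTranspose]
    exact (hB.star.mul (isUnit_det_of_right_inverse hUU)).ne_zero
  · rw [conjTranspose_mul, Matrix.mul_assoc, ← Matrix.mul_assoc U, hUU, one_mul,
      conjTranspose_conjTranspose]
  · calc M = (B⁻¹ * B)ᴴ * M * (B⁻¹ * B) := by simp [nonsing_inv_mul _ hB]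
      _ = Bᴴ * (B⁻¹ᴴ * M * B⁻¹) * B := by simp only [conjTranspose_mul, Matrix.mul_assoc]
      _ = _ := by
        rw [hspec]
        simp only [conjTranspose_mul, conjTranspose_conjTranspose, Matrix.mul_assoc]

theorem PosDef.natDegree_det_map_C_add_X_smul [DecidableEq n] {T M : Matrix n n 𝕜}
    (hT : T.PosDef) (hM : M.IsHermitian) :
    (T.map Polynomial.C + (Polynomial.X : Polynomial 𝕜) • M.map Polynomial.C).det.natDegree =
      M.rank := by
  obtain ⟨P, d, hP, rfl, rfl⟩ := hT.exists_simultaneous_diagonalization hM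
  have hpencil : (P * Pᴴ).map Polynomial.C +
      (Polynomial.X : Polynomial 𝕜) • (P * diagonal (RCLike.ofReal ∘ d) * Pᴴ).map Polynomial.C =
      P.map Polynomial.C * diagonal (fun i => 1 + Polynomial.C (d i : 𝕜) * Polynomial.X) *
        Pᴴ.map Polynomial.C := by
    have hdiag : diagonal (fun i => 1 + Polynomial.C (d i : 𝕜) * Polynomial.X) =
        1 + (Polynomial.X : Polynomial 𝕜) • (diagonal (RCLike.ofReal ∘ d)).map Polynomial.C := by
      ext i j
      rcases eq_or_ne i j with rfl | h
      · simp only [diagonal_apply_eq, add_apply, one_apply_eq, smul_apply, map_apply,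
          Function.comp_apply, smul_eq_mul, mul_comm]
      · simp [h]
    rw [hdiag, Matrix.mul_add, Matrix.add_mul, Matrix.mul_one, Matrix.mul_smul, Matrix.smul_mul,
      Matrix.map_mul, Matrix.map_mul, Matrix.map_mul]
  have hPH : Pᴴ.det ≠ 0 := by rwa [det_conjTranspose, star_ne_zero]
  have hfactor (a : 𝕜) :
      (1 + Polynomial.C a * Polynomial.X).natDegree = if a ≠ 0 then 1 else 0 := by
    split_ifs with ha
    · rw [add_comm, ← Polynomial.C_1, Polynomial.natDegree_linear ha]
    · simp [not_not.1 ha]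
  rw [hpencil, det_mul, det_mul, rank_mul_eq_left_of_det_ne_zero _ _ hPH,
    rank_mul_eq_right_of_det_ne_zero _ _ hP, rank_diagonal, det_diagonal,
    ← RingHom.mapMatrix_apply, ← RingHom.mapMatrix_apply, ← RingHom.map_det, ← RingHom.map_det,
    Polynomial.natDegree_mul_C (by simpa using hPH), Polynomial.natDegree_C_mul (by simpa using hP),
    Polynomial.natDegree_prod _ _ fun i _ h => by simpa using congrArg (Polynomial.eval 0) h]
  simp only [hfactor, Finset.sum_boole, Fintype.card_subtype, Function.comp_apply, Nat.cast_id]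

end Matrix

namespace Polynomial

theorem natDegree_sum_one_add_X_pow {R α : Type*} [Semiring R] [CharZero R]
    (s : Finset α) (e : α → ℕ) : (∑ a ∈ s, (1 + X : R[X]) ^ e a).natDegree = s.sup e := by
  have hlin : (1 + X : R[X]).natDegree ≤ 1 := by compute_degree
  refine le_antisymm (natDegree_sum_le_of_forall_le s _ fun a ha =>
    (natDegree_pow_le_of_le _ hlin).trans (by simpa using Finset.le_sup ha)) ?_
  obtain rfl | hs := s.eq_empty_or_nonempty
  · simp
  obtain ⟨a₀, ha₀, hmax⟩ := s.exists_mem_eq_sup hs e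
  refine le_natDegree_of_ne_zero ?_
  simp only [finsetSum_coeff, coeff_one_add_X_pow, ← Nat.cast_sum, Nat.cast_ne_zero]
  exact (Finset.sum_pos' (fun _ _ => Nat.zero_le _)
    ⟨a₀, ha₀, by rw [hmax, Nat.choose_self]; exact one_pos⟩).ne'

end Polynomial

section BasisGeneratingPolynomial

variable {ι R : Type*}

noncomputable def basisGenPoly (R : Type*) [CommSemiring R] (𝓑 : Finset (Finset ι)) :
    MvPolynomial ι R :=
  ∑ B ∈ 𝓑, ∏ i ∈ B, X i

/-- The rank function of the matroid with set of bases `𝓑`. -/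
def basisRank [DecidableEq ι] (𝓑 : Finset (Finset ι)) (S : Finset ι) : ℕ :=
  𝓑.sup fun B => (B ∩ S).card

theorem map_basisGenPoly [CommSemiring R] {S : Type*} [CommSemiring S] (f : R →+* S)
    (𝓑 : Finset (Finset ι)) : map f (basisGenPoly R 𝓑) = basisGenPoly S 𝓑 := by
  simp [basisGenPoly]

variable [DecidableEq ι]

theorem aeval_basisGenPoly_indicator [CommSemiring R] (𝓑 : Finset (Finset ι)) (S : Finset ι) :
    aeval (fun i => if i ∈ S then 1 + Polynomial.X else 1 : ι → Polynomial R)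
        (basisGenPoly R 𝓑) =
      ∑ B ∈ 𝓑, (1 + Polynomial.X) ^ (B ∩ S).card := by
  simp [basisGenPoly]

theorem natDegree_aeval_basisGenPoly_indicator [CommSemiring R] [CharZero R]
    (𝓑 : Finset (Finset ι)) (S : Finset ι) :
    (aeval (fun i => if i ∈ S then 1 + Polynomial.X else 1 : ι → Polynomial R)
      (basisGenPoly R 𝓑)).natDegree = basisRank 𝓑 S := by
  rw [aeval_basisGenPoly_indicator, Polynomial.natDegree_sum_one_add_X_pow, basisRank]

end BasisGeneratingPolynomial

namespace Matrix

variable {n ι : Type*} [Fintype n] [DecidableEq n]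

theorem aeval_det_sum_X_smul {R S : Type*} [CommRing R] [CommRing S] [Algebra R S]
    (σ : ι → S) (E : Finset ι) (A : ι → Matrix n n R) :
    aeval σ (∑ i ∈ E, (X i : MvPolynomial ι R) • (A i).map C).det =
      (∑ i ∈ E, σ i • (A i).map (algebraMap R S)).det := by
  rw [AlgHom.map_det, map_sum]
  congr 1
  refine Finset.sum_congr rfl fun i _ => ?_
  ext j l
  simp

theorem sum_indicator_smul_map_C [DecidableEq ι] {R : Type*} [CommRing R]
    (A : ι → Matrix n n R) {S E : Finset ι} (hS : S ⊆ E) :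
    ∑ i ∈ E, (if i ∈ S then 1 + Polynomial.X else 1 : Polynomial R) • (A i).map Polynomial.C =
      (∑ i ∈ E, A i).map Polynomial.C +
        (Polynomial.X : Polynomial R) • (∑ i ∈ S, A i).map Polynomial.C := by
  have hσ (i : ι) : (if i ∈ S then 1 + Polynomial.X else 1 : Polynomial R) =
      1 + if i ∈ S then Polynomial.X else 0 := by
    split_ifs <;> simp
  simp only [hσ, add_smul, one_smul, ite_smul, zero_smul, Finset.sum_add_distrib,
    Finset.sum_ite_mem, Finset.inter_eq_right.2 hS, ← Finset.smul_sum, ← RingHom.mapMatrix_apply,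
    map_sum]

theorem rank_sum_eq_mul_basisRank [DecidableEq ι] {𝕜 : Type*} [RCLike 𝕜]
    {𝓑 : Finset (Finset ι)} (h𝓑 : 𝓑.Nonempty) {E : Finset ι} {A : ι → Matrix n n 𝕜}
    (hA : ∀ i ∈ E, (A i).PosSemidef) {k : ℕ}
    (hrep : basisGenPoly 𝕜 𝓑 ^ k = (∑ i ∈ E, (X i : MvPolynomial ι 𝕜) • (A i).map C).det)
    {S : Finset ι} (hS : S ⊆ E) :
    (∑ i ∈ S, A i).rank = k * basisRank 𝓑 S := by
  set σ : ι → Polynomial 𝕜 := fun i => if i ∈ S then 1 + Polynomial.X else 1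
  have hline : aeval σ (basisGenPoly 𝕜 𝓑) ^ k =
      ((∑ i ∈ E, A i).map Polynomial.C +
        (Polynomial.X : Polynomial 𝕜) • (∑ i ∈ S, A i).map Polynomial.C).det := by
    rw [← map_pow, hrep, aeval_det_sum_X_smul, Polynomial.algebraMap_eq,
      sum_indicator_smul_map_C A hS]
  have hT : (∑ i ∈ E, A i).PosDef := by
    refine (posSemidef_sum E hA).posDef_iff_det_ne_zero.2 fun hdet => ?_
    have h0 := congrArg (Polynomial.eval 0) hline
    rw [eval_det_add_X_smul, ← RingHom.mapMatrix_apply, ← RingHom.map_det, Polynomial.eval_C,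
      hdet, aeval_basisGenPoly_indicator] at h0
    simp [Polynomial.eval_finsetSum, h𝓑.ne_empty] at h0
  have hdeg := congrArg Polynomial.natDegree hline
  rwa [Polynomial.natDegree_pow, natDegree_aeval_basisGenPoly_indicator,
    hT.natDegree_det_map_C_add_X_smul (posSemidef_sum S fun i hi => hA i (hS hi)).isHermitian,
    eq_comm] at hdeg

end Matrix

theorem f10_eq_basisGenPoly : f10 = basisGenPoly ℝ vamosBases10 := rfl

theorem not_ingletonIneq_vamos :
    ¬ IngletonIneq (basisRank vamosBases10) {1, 2} {5, 6} {3, 4} {7, 8} := by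
  unfold IngletonIneq
  decide +kernel

/-- No power of `f₁₀` has a definite determinantal representation: for every `k ≥ 1`
there are no `d ≥ 1` and positive semidefinite Hermitian `d × d` complex matrices
`A₁, …, A₁₀` with `(f₁₀)^k = det (x₁ A₁ + ⋯ + x₁₀ A₁₀)`. -/
theorem f10_pow_no_definite_determinantal_rep :
    ∀ k : ℕ, 0 < k →
      ¬ ∃ (d : ℕ) (A : ℕ → Matrix (Fin d) (Fin d) ℂ),
          0 < d ∧ (∀ i ∈ Finset.Icc 1 10, (A i).PosSemidef) ∧
          (MvPolynomial.map (algebraMap ℝ ℂ) f10) ^ k =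
            (∑ i ∈ Finset.Icc 1 10,
              (MvPolynomial.X i : MvPolynomial ℕ ℂ) • (A i).map MvPolynomial.C).det := by
  rintro k hk ⟨d, A, -, hA, hrep⟩
  rw [f10_eq_basisGenPoly, map_basisGenPoly] at hrep
  have hrank (S : Finset ℕ) (hS : S ⊆ Finset.Icc 1 10) :
      (∑ i ∈ S, A i).rank = k * basisRank vamosBases10 S :=
    Matrix.rank_sum_eq_mul_basisRank (by decide) hA hrep hS
  have hsub : ({1, 2} ∪ {5, 6} ∪ {3, 4} ∪ {7, 8} : Finset ℕ) ⊆ Finset.Icc 1 10 := by decide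
  have hI := Matrix.ingletonIneq_rank_sum (a := {1, 2}) (b := {5, 6}) (c := {3, 4}) (d := {7, 8})
    fun i hi => hA i (hsub hi)
  refine not_ingletonIneq_vamos ((ingletonIneq_const_mul_iff hk).1 ?_)
  simpa (disch := decide) only [IngletonIneq, hrank] using hI
end

section
/- For every integer n ≥ 4, let 𝓗_{2n} be the collection of subsets of {1,…,2n} of the form {1,2,2k−1,2k} or {2k−1,2k,2k+1,2k+2} for 2 ≤ k ≤ n (all indices taken within {1,…,2n}). Then there exists a matroid on the ground set {1,…,2n} whose bases are exactly the 4-element subsets B of {1,…,2n} with B ∉ 𝓗_{2n}. -/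
/-!
Distinct members of `𝓗₂ₙ` meet in at most two points. For any family `H` of `k`-sets whose
distinct members meet in at most `k - 2` points, the `k`-sets outside `H` satisfy basis exchange
(they are the bases of a sparse paving matroid): the candidates for exchanging `a ∈ B₁ \ B₂`
against `b ∈ B₂ \ B₁` all contain the `(k - 1)`-set `B₁ \ {a}`, so at most one of them lies in
`H`, and if there is only one candidate it is `B₂` itself.
-/

/-- The collection `𝓗₂ₙ` of subsets of `{1,…,2n}` of the form `{1,2,2k−1,2k}` or
`{2k−1,2k,2k+1,2k+2}` for `2 ≤ k ≤ n` (indices taken within `{1,…,2n}`). -/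
def H2n (n : ℕ) : Finset (Finset ℕ) :=
  (Finset.Icc 2 n).biUnion fun k =>
    {{1, 2, 2 * k - 1, 2 * k}, {2 * k - 1, 2 * k, 2 * k + 1, 2 * k + 2}}

/-- The bases of the `2n`-Vámos matroid: all 4-element subsets of `{1,…,2n}` not
belonging to `𝓗₂ₙ`. -/
def vamosBases2n (n : ℕ) : Finset (Finset ℕ) :=
  ((Finset.Icc 1 (2 * n)).powersetCard 4) \ H2n n

open Finset

section SparsePaving

variable {α : Type*} [DecidableEq α] {k : ℕ} {E : Finset α} {H : Finset (Finset α)}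

lemma exists_insert_erase_mem_powersetCard_sdiff
    (hH : (H : Set (Finset α)).Pairwise fun X Y => #(X ∩ Y) + 2 ≤ k)
    {B₁ B₂ : Finset α} (hB₁ : B₁ ∈ E.powersetCard k \ H) (hB₂ : B₂ ∈ E.powersetCard k \ H)
    {a : α} (ha : a ∈ B₁ \ B₂) : ∃ b ∈ B₂ \ B₁, insert b (B₁.erase a) ∈ E.powersetCard k \ H := by
  simp only [mem_sdiff, mem_powersetCard] at hB₁ hB₂ ⊢
  obtain ⟨⟨hB₁E, h₁⟩, -⟩ := hB₁
  obtain ⟨⟨hB₂E, h₂⟩, hB₂H⟩ := hB₂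
  set T := B₁.erase a
  have hTB₁ : T ⊆ B₁ := erase_subset a B₁
  have hT : #T + 1 = k := by rw [card_erase_add_one (mem_sdiff.1 ha).1, h₁]
  have hins : ∀ b ∈ B₂ \ B₁, insert b T ⊆ E ∧ #(insert b T) = k := fun b hb =>
    ⟨insert_subset (hB₂E (mem_sdiff.1 hb).1) (hTB₁.trans hB₁E),
      by rw [card_insert_of_notMem fun h => (mem_sdiff.1 hb).2 (hTB₁ h), hT]⟩
  by_contra! hall
  replace hall : ∀ b ∈ B₂ \ B₁, insert b T ∈ H := fun b hb => hall b (mem_sdiff.1 hb) (hins b hb)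
  -- Two distinct members of `H` cannot share the `(k-1)`-set `T`.
  have hle : #(B₂ \ B₁) ≤ 1 := by
    refine card_le_one.2 fun b hb b' hb' => by_contra fun hbb' => ?_
    have hne : insert b T ≠ insert b' T := fun h => by
      have : b' ∈ insert b T := h ▸ mem_insert_self b' T
      rcases mem_insert.1 this with h | h
      · exact hbb' h.symm
      · exact (mem_sdiff.1 hb').2 (hTB₁ h)
    have hinter := hH (hall b hb) (hall b' hb') hne
    have := card_le_card (subset_inter (subset_insert b T) (subset_insert b' T))
    omega
  have hTB₂ : T ⊆ B₂ := fun x hx => by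
    by_contra hxB₂
    have hx' := mem_erase.1 hx
    exact hx'.1 (card_le_one.1 (card_sdiff_comm (h₂.trans h₁.symm) ▸ hle) x
      (mem_sdiff.2 ⟨hx'.2, hxB₂⟩) a ha)
  obtain ⟨b, hb⟩ : (B₂ \ B₁).Nonempty :=
    card_pos.1 (card_sdiff_comm (h₁.trans h₂.symm) ▸ card_pos.2 ⟨a, ha⟩)
  have hbT : insert b T = B₂ :=
    eq_of_subset_of_card_le (insert_subset (mem_sdiff.1 hb).1 hTB₂) (by rw [(hins b hb).2, h₂])
  exact hB₂H (hbT ▸ hall b hb)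

theorem Matroid.exists_sparsePaving
    (hH : (H : Set (Finset α)).Pairwise fun X Y => #(X ∩ Y) + 2 ≤ k)
    {B₀ : Finset α} (hB₀ : B₀ ∈ E.powersetCard k \ H) :
    ∃ M : Matroid α, M.E = ↑E ∧ ∀ S : Set α, M.IsBase S ↔ ∃ B ∈ E.powersetCard k \ H, S = ↑B := by
  refine ⟨Matroid.ofIsBaseOfFinite E.finite_toSet (fun S => ∃ B ∈ E.powersetCard k \ H, S = ↑B)
    ⟨B₀, B₀, hB₀, rfl⟩ ?_ ?_, rfl, fun S => Iff.rfl⟩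
  · rintro _ _ ⟨B₁, hB₁, rfl⟩ ⟨B₂, hB₂, rfl⟩ a ha
    obtain ⟨b, hb, hbB⟩ :=
      exists_insert_erase_mem_powersetCard_sdiff hH hB₁ hB₂ (by simpa using ha)
    exact ⟨b, by simpa using hb, _, hbB, by simp⟩
  · rintro _ ⟨B, hB, rfl⟩
    exact coe_subset.2 (mem_powersetCard.1 (mem_sdiff.1 hB).1).1

end SparsePaving

lemma H2n_pairwise_card_inter (n : ℕ) :
    (H2n n : Set (Finset ℕ)).Pairwise fun X Y => #(X ∩ Y) + 2 ≤ 4 := by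
  intro X hX Y hY hne
  simp only [H2n, coe_biUnion, Set.mem_iUnion, coe_insert, coe_singleton, Set.mem_insert_iff,
    Set.mem_singleton_iff, mem_coe, mem_Icc] at hX hY
  obtain ⟨k, hk, hXk⟩ := hX
  obtain ⟨j, hj, hYj⟩ := hY
  suffices ∃ a b : ℕ, X ∩ Y ⊆ {a, b} by
    obtain ⟨a, b, hab⟩ := this
    have := (card_le_card hab).trans (card_le_two (a := a) (b := b))
    omega
  rcases hXk with rfl | rfl <;> rcases hYj with rfl | rfl
  · obtain rfl | hkj := eq_or_ne k j
    · exact absurd rfl hne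
    refine ⟨1, 2, fun x hx => ?_⟩
    simp only [mem_inter, mem_insert, mem_singleton] at hx ⊢
    omega
  · refine ⟨2 * k - 1, 2 * k, fun x hx => ?_⟩
    simp only [mem_inter, mem_insert, mem_singleton] at hx ⊢
    omega
  · refine ⟨2 * j - 1, 2 * j, fun x hx => ?_⟩
    simp only [mem_inter, mem_insert, mem_singleton] at hx ⊢
    omega
  · obtain rfl | hkj := eq_or_ne k j
    · exact absurd rfl hne
    refine ⟨2 * min k j + 1, 2 * min k j + 2, fun x hx => ?_⟩
    simp only [mem_inter, mem_insert, mem_singleton] at hx ⊢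
    omega

lemma even_mem_of_mem_H2n {n : ℕ} {X : Finset ℕ} (hX : X ∈ H2n n) : ∃ k, 2 * k ∈ X := by
  simp only [H2n, mem_biUnion, mem_insert, mem_singleton] at hX
  obtain ⟨k, -, rfl | rfl⟩ := hX <;> exact ⟨k, by simp⟩

lemma one_three_five_seven_mem_vamosBases2n {n : ℕ} (hn : 4 ≤ n) :
    {1, 3, 5, 7} ∈ vamosBases2n n := by
  refine mem_sdiff.2 ⟨mem_powersetCard.2 ⟨fun x hx => ?_, rfl⟩, fun h => ?_⟩
  · simp only [mem_insert, mem_singleton] at hx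
    simp only [mem_Icc]
    omega
  · obtain ⟨k, hk⟩ := even_mem_of_mem_H2n h
    simp only [mem_insert, mem_singleton] at hk
    omega

/-- For every `n ≥ 4` there is a matroid on the ground set `{1,…,2n}` whose bases are
exactly the 4-element subsets of `{1,…,2n}` not in `𝓗₂ₙ`. -/
theorem exists_matroid_vamos2n (n : ℕ) (hn : 4 ≤ n) :
    ∃ M : Matroid ℕ, M.E = ↑(Finset.Icc 1 (2 * n)) ∧
      ∀ S : Set ℕ, M.IsBase S ↔ ∃ B ∈ vamosBases2n n, S = ↑B :=
  Matroid.exists_sparsePaving (H2n_pairwise_card_inter n) (one_three_five_seven_mem_vamosBases2n hn)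
end

section
/- The matroid V_10 is not representable over any field: for every field F, every F-vector space W, and every function v : {1,…,10} → W, it is not the case that for every 4-element subset S of {1,…,10}, the family (v_i)_{i∈S} is linearly independent over F if and only if S ∈ 𝓑, where 𝓑 consists of all 4-element subsets of {1,…,10} except {1,2,3,4}, {1,2,5,6}, {1,2,7,8}, {1,2,9,10}, {3,4,5,6}, {5,6,7,8}, {7,8,9,10}. -/
open Module Submodule

namespace Submodule

variable {K V : Type*} [DivisionRing K] [AddCommGroup V] [Module K V]

theorem inf_ne_bot_of_finrank_sup_lt {X Y : Submodule K V} [FiniteDimensional K X]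
    [FiniteDimensional K Y] (h : finrank K ↥(X ⊔ Y) < finrank K X + finrank K Y) : X ⊓ Y ≠ ⊥ := by
  intro hXY
  have := finrank_sup_add_finrank_inf_eq X Y
  rw [hXY, finrank_bot] at this
  omega

theorem eq_of_le_of_ne_bot_of_finrank_le_one {S T : Submodule K V} [FiniteDimensional K T]
    (hST : S ≤ T) (hS : S ≠ ⊥) (hT : finrank K T ≤ 1) : S = T :=
  have := finiteDimensional_of_le hST
  eq_of_le_of_finrank_le hST (hT.trans (one_le_finrank_iff.2 hS))

/-- Three lines meeting pairwise but not lying in a plane pass through a common point. -/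
theorem inf_le_of_inf_ne_bot_of_not_le_sup {A C D : Submodule K V} [FiniteDimensional K A]
    [FiniteDimensional K C] (hC : finrank K C ≤ 2)
    (hAD : finrank K ↥(A ⊓ D) ≤ 1) (hAC : A ⊓ C ≠ ⊥) (hCD : C ⊓ D ≠ ⊥) (hCAD : ¬ C ≤ A ⊔ D) :
    A ⊓ D ≤ C := by
  have hM : finrank K ↥(C ⊓ (A ⊔ D)) ≤ 1 := by
    have : C ⊓ (A ⊔ D) < C := inf_le_left.lt_of_ne fun h => hCAD (inf_eq_left.1 h)
    have := finrank_lt_finrank_of_lt this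
    omega
  have hACM : A ⊓ C = C ⊓ (A ⊔ D) :=
    eq_of_le_of_ne_bot_of_finrank_le_one
      (le_inf inf_le_right (inf_le_left.trans le_sup_left)) hAC hM
  have hCDM : C ⊓ D = C ⊓ (A ⊔ D) :=
    eq_of_le_of_ne_bot_of_finrank_le_one
      (le_inf inf_le_left (inf_le_right.trans le_sup_right)) hCD hM
  have hACD : A ⊓ C = A ⊓ D :=
    eq_of_le_of_ne_bot_of_finrank_le_one
      (le_inf inf_le_left ((hACM.trans hCDM.symm).le.trans inf_le_right)) hAC hAD
  exact hACD ▸ inf_le_right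

theorem finrank_sup_lt_four_of_vamos {A C D E : Submodule K V} [FiniteDimensional K A]
    [FiniteDimensional K C] [FiniteDimensional K D] [FiniteDimensional K E]
    (hA : finrank K A = 2) (hC : finrank K C = 2) (hD : finrank K D = 2) (hE : finrank K E = 2)
    (hAC : finrank K ↥(A ⊔ C) < 4) (hAD : finrank K ↥(A ⊔ D) < 4)
    (hAE : finrank K ↥(A ⊔ E) < 4) (hCD : finrank K ↥(C ⊔ D) < 4)
    (hDE : finrank K ↥(D ⊔ E) < 4) (hACD : 4 ≤ finrank K ↥(A ⊔ C ⊔ D))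
    (hADE : 4 ≤ finrank K ↥(A ⊔ D ⊔ E)) :
    finrank K ↥(C ⊔ E) < 4 := by
  have hAD_pt : finrank K ↥(A ⊓ D) ≤ 1 := by
    by_contra! h
    have hDA : D ≤ A :=
      (eq_of_le_of_finrank_le inf_le_right (by omega) : A ⊓ D = D).symm.le.trans inf_le_left
    rw [sup_eq_left.2 (hDA.trans le_sup_left)] at hACD
    omega
  have hAD_ne : A ⊓ D ≠ ⊥ := inf_ne_bot_of_finrank_sup_lt (by omega)
  have hAD_le_C : A ⊓ D ≤ C := by
    refine inf_le_of_inf_ne_bot_of_not_le_sup (by omega) hAD_pt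
      (inf_ne_bot_of_finrank_sup_lt (by omega)) (inf_ne_bot_of_finrank_sup_lt (by omega))
      fun hC' => ?_
    rw [sup_right_comm, sup_eq_left.2 hC'] at hACD
    omega
  have hAD_le_E : A ⊓ D ≤ E := by
    refine inf_le_of_inf_ne_bot_of_not_le_sup (by omega) hAD_pt
      (inf_ne_bot_of_finrank_sup_lt (by omega))
      (inf_comm D E ▸ inf_ne_bot_of_finrank_sup_lt (by omega)) fun hE' => ?_
    rw [sup_eq_left.2 hE'] at hADE
    omega
  have hCE : 1 ≤ finrank K ↥(C ⊓ E) :=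
    one_le_finrank_iff.2 (ne_bot_of_le_ne_bot hAD_ne (le_inf hAD_le_C hAD_le_E))
  have := finrank_sup_add_finrank_inf_eq C E
  omega

end Submodule

section LinearRepresentation

variable {K V ι : Type*} [DivisionRing K] [AddCommGroup V] [Module K V]

variable (K) in
def IsLinearRepresentation (v : ι → V) (E : Finset ι) (r : ℕ) (𝓑 : Finset (Finset ι)) : Prop :=
  ∀ S ⊆ E, S.card = r → (LinearIndependent K (fun i : S => v i) ↔ S ∈ 𝓑)

variable [DecidableEq V]

theorem linearIndependent_finset_iff_card_le_finrank_span {v : ι → V} {S : Finset ι} :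
    LinearIndependent K (fun i : S => v i) ↔ S.card ≤ finrank K (span K (S.image v : Set V)) := by
  rw [linearIndependent_iff_card_le_finrank_span, Fintype.card_coe, Finset.coe_image,
    Set.image_eq_range, Set.finrank]
  rfl

theorem finrank_span_finset_image_eq_card {v : ι → V} {S : Finset ι}
    (h : LinearIndependent K (fun i : S => v i)) :
    finrank K (span K (S.image v : Set V)) = S.card :=
  le_antisymm ((finrank_span_finset_le_card _).trans Finset.card_image_le)
    (linearIndependent_finset_iff_card_le_finrank_span.1 h)

namespace IsLinearRepresentation

variable {v : ι → V} {E : Finset ι} {r : ℕ} {𝓑 : Finset (Finset ι)} {S B : Finset ι}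

theorem finrank_span_image_eq_card (hv : IsLinearRepresentation K v E r 𝓑)
    (h𝓑 : 𝓑 ⊆ E.powersetCard r) (hB : B ∈ 𝓑) (hSB : S ⊆ B) :
    finrank K (span K (S.image v : Set V)) = S.card :=
  have hBE := Finset.mem_powersetCard.1 (h𝓑 hB)
  finrank_span_finset_image_eq_card
    ((show LinearIndepOn K v B from (hv B hBE.1 hBE.2).2 hB).mono (Finset.coe_subset.2 hSB))

theorem le_finrank_span_image (hv : IsLinearRepresentation K v E r 𝓑)
    (h𝓑 : 𝓑 ⊆ E.powersetCard r) (hB : B ∈ 𝓑) (hBS : B ⊆ S) :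
    r ≤ finrank K (span K (S.image v : Set V)) :=
  calc r = finrank K (span K (B.image v : Set V)) := by
        rw [hv.finrank_span_image_eq_card h𝓑 hB le_rfl, (Finset.mem_powersetCard.1 (h𝓑 hB)).2]
    _ ≤ _ := finrank_mono (span_mono (by gcongr))

theorem finrank_span_image_lt [DecidableEq ι] (hv : IsLinearRepresentation K v E r 𝓑)
    (hS : S ∈ E.powersetCard r \ 𝓑) : finrank K (span K (S.image v : Set V)) < r := by
  obtain ⟨hSE, hS𝓑⟩ := Finset.mem_sdiff.1 hS
  obtain ⟨hSE, hcard⟩ := Finset.mem_powersetCard.1 hSE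
  rw [← hcard, ← not_le]
  exact mt linearIndependent_finset_iff_card_le_finrank_span.2 (mt (hv S hSE hcard).1 hS𝓑)

end IsLinearRepresentation

end LinearRepresentation

/-- The Vámos matroid `V₁₀` is not representable over any field: there is no field `F`,
`F`-vector space `W` and assignment `v : {1,…,10} → W` such that a 4-element subset
`S ⊆ {1,…,10}` indexes a linearly independent family `(vᵢ)_{i ∈ S}` exactly when
`S ∈ 𝓑`. -/
theorem vamos10_not_representable :
    ∀ (F : Type*) [Field F] (W : Type*) [AddCommGroup W] [Module F W] (v : ℕ → W),
      ¬ (∀ S : Finset ℕ, S ⊆ Finset.Icc 1 10 → S.card = 4 →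
          (LinearIndependent F (fun i : S => v (i : ℕ)) ↔ S ∈ vamosBases10)) := by
  rintro F _ W _ _ v (hv : IsLinearRepresentation F v (Finset.Icc 1 10) 4 vamosBases10)
  classical
  set P : Finset ℕ → Submodule F W := fun S => span F (S.image v : Set W)
  have h𝓑 : vamosBases10 ⊆ (Finset.Icc 1 10).powersetCard 4 := Finset.sdiff_subset
  have sup_eq (S T : Finset ℕ) : P S ⊔ P T = P (S ∪ T) := by
    simp only [P, Finset.image_union, Finset.coe_union, span_union]
  have line {i j : ℕ} (B : Finset ℕ) (hB : B ∈ vamosBases10) (hij : i ≠ j)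
      (hSB : {i, j} ⊆ B) : finrank F (P {i, j}) = 2 := by
    rw [hv.finrank_span_image_eq_card h𝓑 hB hSB, Finset.card_pair hij]
  have key := finrank_sup_lt_four_of_vamos (A := P {1, 2}) (C := P {5, 6}) (D := P {7, 8})
    (E := P {9, 10})
  repeat rw [sup_eq] at key
  refine absurd (key (line {1, 2, 5, 7} ?_ ?_ ?_) (line {5, 6, 9, 10} ?_ ?_ ?_)
    (line {1, 7, 8, 9} ?_ ?_ ?_) (line {5, 6, 9, 10} ?_ ?_ ?_) (hv.finrank_span_image_lt ?_)
    (hv.finrank_span_image_lt ?_) (hv.finrank_span_image_lt ?_) (hv.finrank_span_image_lt ?_)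
    (hv.finrank_span_image_lt ?_) (hv.le_finrank_span_image h𝓑 (B := {1, 2, 5, 7}) ?_ ?_)
    (hv.le_finrank_span_image h𝓑 (B := {1, 2, 7, 9}) ?_ ?_))
    (not_lt.2 (hv.le_finrank_span_image h𝓑 (B := {5, 6, 9, 10}) ?_ ?_)) <;> decide
end

section
/- For all integers 1 ≤ r ≤ n, the elementary symmetric polynomial e_{r,n}(x) = Σ_{I ⊆ {1,…,n}, |I| = r} Π_{i∈I} x_i is stable. (Equivalently, the uniform matroid U_{r,n} has the half-plane property.) -/
/-!
Put `aᵢ = wᵢ + vᵢ z`, so that `e_r(z v + w) = e_r(a)`, which up to sign is the coefficient of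
`X^(n-r)` in `∏ (X - aᵢ)`, i.e. the value at `0` of the `(n-r)`-th derivative divided by `(n-r)!`.
If `Im z ≠ 0`, all `aᵢ` lie in the open half-plane `{u | 0 < Im z * Im u}`, which is convex and
misses `0`. By the Gauss–Lucas theorem every derivative of `∏ (X - aᵢ)` has its roots in that
half-plane, so none of them vanishes at `0`.
-/

open MvPolynomial

/-- Stability of a (homogeneous) real polynomial in `n` variables: for every
`v ∈ (ℝ_{>0})ⁿ` and `w ∈ ℝⁿ`, every complex root of the univariate real polynomial
`t ↦ f (t • v + w)` is real. -/
def IsStable {n : ℕ} (f : MvPolynomial (Fin n) ℝ) : Prop :=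
  ∀ v w : Fin n → ℝ, (∀ i, 0 < v i) →
    ∀ z : ℂ,
      (Polynomial.aeval z)
        ((MvPolynomial.aeval fun i =>
          Polynomial.C (w i) + Polynomial.C (v i) * Polynomial.X) f) = 0 →
      z.im = 0

namespace Polynomial

variable {P : ℂ[X]} {S : Set ℂ}

theorem rootSet_derivative_subset_of_convex (hS : Convex ℝ S) (hP : P.rootSet ℂ ⊆ S) :
    (derivative P).rootSet ℂ ⊆ S := by
  by_cases hdeg : 0 < P.degree
  · exact (rootSet_derivative_subset_convexHull_rootSet hdeg).trans (convexHull_min hP hS)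
  · rw [derivative_of_natDegree_zero (natDegree_eq_zero_iff_degree_le_zero.mpr (not_lt.mp hdeg)),
      rootSet_zero]
    exact Set.empty_subset S

theorem rootSet_iterate_derivative_subset_of_convex (hS : Convex ℝ S) (hP : P.rootSet ℂ ⊆ S)
    (k : ℕ) : (derivative^[k] P).rootSet ℂ ⊆ S := by
  induction k with
  | zero => exact hP
  | succ k ih =>
    rw [Function.iterate_succ_apply']
    exact rootSet_derivative_subset_of_convex hS ih

theorem coeff_ne_zero_of_rootSet_subset_convex (hS : Convex ℝ S) (h0 : (0 : ℂ) ∉ S)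
    (hP : P.rootSet ℂ ⊆ S) (hP0 : P ≠ 0) {k : ℕ} (hk : k ≤ P.natDegree) : P.coeff k ≠ 0 := by
  intro hcoeff
  set Q := derivative^[k] P
  have hQ_coeff : Q.coeff (P.natDegree - k) ≠ 0 := by
    rw [coeff_iterate_derivative, Nat.sub_add_cancel hk, nsmul_eq_mul]
    exact mul_ne_zero (Nat.cast_ne_zero.mpr (Nat.descFactorial_eq_zero_iff_lt.not.mpr hk.not_gt))
      (leadingCoeff_ne_zero.mpr hP0)
  have hQ0 : Q ≠ 0 := fun h => hQ_coeff (by rw [h, coeff_zero])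
  have hQ : Q.eval 0 = 0 := by
    rw [← coeff_zero_eq_eval_zero, coeff_iterate_derivative, zero_add, hcoeff, smul_zero]
  exact h0 (rootSet_iterate_derivative_subset_of_convex hS hP k
    (mem_rootSet.mpr ⟨hQ0, by rwa [coe_aeval_eq_eval]⟩))

end Polynomial

theorem Multiset.esymm_ne_zero_of_forall_mem_convex {s : Multiset ℂ} {S : Set ℂ}
    (hS : Convex ℝ S) (h0 : (0 : ℂ) ∉ S) (hs : ∀ a ∈ s, a ∈ S) {r : ℕ} (hr : r ≤ card s) :
    s.esymm r ≠ 0 := by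
  have hcoeff := prod_X_sub_C_coeff s (Nat.sub_le (card s) r)
  rw [Nat.sub_sub_self hr] at hcoeff
  have hroots : (s.map fun a => Polynomial.X - Polynomial.C a).prod.rootSet ℂ ⊆ S := by
    intro a ha
    rw [Polynomial.rootSet, Polynomial.aroots_def, Algebra.algebraMap_self, Polynomial.map_id,
      Polynomial.roots_multiset_prod_X_sub_C, Finset.mem_coe, Multiset.mem_toFinset] at ha
    exact hs a ha
  intro hesymm
  refine Polynomial.coeff_ne_zero_of_rootSet_subset_convex hS h0 hroots
    (Polynomial.monic_multiset_prod_of_monic _ _ fun a _ => Polynomial.monic_X_sub_C a).ne_zero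
    ?_ (by rw [hcoeff, hesymm, mul_zero])
  rw [Polynomial.natDegree_multiset_prod_X_sub_C_eq_card]
  exact Nat.sub_le _ _

theorem esymm_isStable_general (n r : ℕ) (hrn : r ≤ n) :
    IsStable (∑ I ∈ Finset.powersetCard r (Finset.univ : Finset (Fin n)),
      ∏ i ∈ I, (MvPolynomial.X i : MvPolynomial (Fin n) ℝ)) := by
  intro v w hv z hz
  rw [← esymm, ← AlgHom.comp_apply, comp_aeval, aeval_esymm_eq_multiset_esymm] at hz
  by_contra him
  refine Multiset.esymm_ne_zero_of_forall_mem_convex (S := {u | 0 < z.im * u.im}) ?_ (by simp) ?_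
    (by simpa using hrn) hz
  · exact convex_halfSpace_gt (z.im • Complex.imLm).isLinear 0
  · rintro _ ha
    obtain ⟨i, -, rfl⟩ := Multiset.mem_map.mp ha
    simp only [map_add, map_mul, Polynomial.aeval_C, Polynomial.aeval_X, Complex.coe_algebraMap,
      Set.mem_ofPred_eq, Complex.add_im, Complex.mul_im, Complex.ofReal_im, Complex.ofReal_re,
      zero_mul, add_zero, zero_add]
    rw [mul_left_comm]
    exact mul_pos (hv i) (mul_self_pos.mpr him)

/-- For all `1 ≤ r ≤ n`, the elementary symmetric polynomial
`e_{r,n} = Σ_{|I| = r} Π_{i ∈ I} xᵢ` is stable; equivalently, the uniform matroid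
`U_{r,n}` has the half-plane property. -/
theorem esymm_isStable (n r : ℕ) (hr : 1 ≤ r) (hrn : r ≤ n) :
    IsStable (∑ I ∈ Finset.powersetCard r (Finset.univ : Finset (Fin n)),
      ∏ i ∈ I, (MvPolynomial.X i : MvPolynomial (Fin n) ℝ)) :=
  esymm_isStable_general n r hrn
end
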